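/- arXiv:2507.14312 — 5 statements merged into one kernel-verified Lean document; each statement's English description precedes it below -/
import Mathlib

section
/- (Gradient of the soft contrastive loss.) The per-sample soft contrastive loss f(z) = − Σ_{j=1}^N p_j(z) log p_j(z) is differentiable and for every z ∈ E its gradient equals ∇f(z) = Σ_{j=1}^N β_j(z) · ( − t_{ĉ(j)} + Σ_{k=1}^C w_k(z) t_k ), where β_j(z) = p_j(z)(1 + log p_j(z)) and w_k(z) = N_k q_k(z) / Σ_{c=1}^C N_c q_c(z). -/
set_option maxHeartbeats 1000000


open scoped RealInnerProductSpace BigOperators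

/-- Gradient of the per-sample soft contrastive loss
`f(z) = -∑_j p_j(z) log p_j(z)`:
`∇f(z) = ∑_j β_j(z) • (-t_{ĉ(j)} + ∑_k w_k(z) • t_k)` with
`β_j(z) = p_j(z)(1 + log p_j(z))` and `w_k(z) = N_k q_k(z) / ∑_c N_c q_c(z)`. -/
theorem soft_contrastive_loss_gradient
    {E : Type*} [NormedAddCommGroup E] [InnerProductSpace ℝ E] [FiniteDimensional ℝ E]
    {C N : ℕ} (hC : 1 ≤ C) (hN : 1 ≤ N) (t : Fin C → E)
    (chat : Fin N → Fin C)
    (Nc : Fin C → ℕ)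
    (hNc : ∀ k, Nc k = (Finset.univ.filter fun j : Fin N => chat j = k).card)
    (q : E → Fin C → ℝ)
    (hq : ∀ (z : E) (k : Fin C),
      q z k = Real.exp ⟪z, t k⟫ / ∑ c, Real.exp ⟪z, t c⟫)
    (p : E → Fin N → ℝ)
    (hp : ∀ (z : E) (j : Fin N),
      p z j = Real.exp ⟪z, t (chat j)⟫ / ∑ l, Real.exp ⟪z, t (chat l)⟫) :
    ∀ z : E,
      DifferentiableAt ℝ (fun y : E => -∑ j, p y j * Real.log (p y j)) z ∧
      gradient (fun y : E => -∑ j, p y j * Real.log (p y j)) z =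
        ∑ j, (p z j * (1 + Real.log (p z j))) •
          (-t (chat j) + ∑ k, ((Nc k : ℝ) * q z k / ∑ c, (Nc c : ℝ) * q z c) • t k) := by
  intro z
  haveI : Nonempty (Fin C) := ⟨⟨0, hC⟩⟩
  haveI : Nonempty (Fin N) := ⟨⟨0, hN⟩⟩
  set u : Fin N → E := fun j => t (chat j) with hu
  set S : E → ℝ := fun y => ∑ l, Real.exp ⟪y, u l⟫ with hS
  have hSpos : ∀ y, 0 < S y := fun y =>
    Finset.sum_pos (fun l _ => Real.exp_pos _) Finset.univ_nonempty
  have hppos : ∀ y j, 0 < p y j := by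
    intro y j
    rw [hp]
    exact div_pos (Real.exp_pos _) (hSpos y)
  -- fiber lemma
  have fiber : ∀ g : Fin C → ℝ, (∑ l, g (chat l)) = ∑ k, (Nc k : ℝ) * g k := by
    intro g
    rw [← Finset.sum_fiberwise' Finset.univ chat g]
    refine Finset.sum_congr rfl fun k _ => ?_
    rw [Finset.sum_const, hNc k, nsmul_eq_mul]
  -- derivative of inner products
  have hinner : ∀ v : E, HasFDerivAt (fun y : E => ⟪y, v⟫) (innerSL ℝ v) z := by
    intro v
    have : (fun y : E => ⟪y, v⟫) = fun y => (innerSL ℝ v) y := by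
      ext y; simp [real_inner_comm]
    rw [this]
    exact (innerSL ℝ v).hasFDerivAt
  have hexp : ∀ v : E,
      HasFDerivAt (fun y : E => Real.exp ⟪y, v⟫) (Real.exp ⟪z, v⟫ • innerSL ℝ v) z :=
    fun v => (hinner v).exp
  have hSder : HasFDerivAt S (∑ l, Real.exp ⟪z, u l⟫ • innerSL ℝ (u l)) z :=
    HasFDerivAt.fun_sum fun l _ => hexp (u l)
  -- derivative of p · j
  set Dp : Fin N → (E →L[ℝ] ℝ) := fun j =>
    p z j • (innerSL ℝ (u j) - ∑ l, p z l • innerSL ℝ (u l)) with hDp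
  have hpder : ∀ j, HasFDerivAt (fun y => p y j) (Dp j) z := by
    intro j
    have hinv : HasFDerivAt (fun y => (S y)⁻¹)
        ((-(S z ^ 2)⁻¹) • (∑ l, Real.exp ⟪z, u l⟫ • innerSL ℝ (u l))) z :=
      (hasDerivAt_inv (hSpos z).ne').comp_hasFDerivAt z hSder
    have hmul := (hexp (u j)).fun_mul hinv
    have heq : (fun y => p y j) = fun y => Real.exp ⟪y, u j⟫ * (S y)⁻¹ := by
      ext y; rw [hp, div_eq_mul_inv]
    rw [heq]
    refine hmul.congr_fderiv (Eq.symm ?_)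
    ext w
    have hSz := (hSpos z).ne'
    have h1 : ∀ l, p z l = Real.exp ⟪z, u l⟫ / S z := fun l => hp z l
    simp only [hDp, ContinuousLinearMap.smul_apply, ContinuousLinearMap.sub_apply,
      ContinuousLinearMap.add_apply, ContinuousLinearMap.sum_apply, ContinuousLinearMap.coe_smul',
      Pi.smul_apply, smul_eq_mul]
    rw [show (∑ l, p z l * ((innerSL ℝ) (u l)) w)
        = (S z)⁻¹ * ∑ l, Real.exp ⟪z, u l⟫ * ((innerSL ℝ) (u l)) w
        from by rw [Finset.mul_sum]; exact Finset.sum_congr rfl fun l _ => by rw [h1]; ring]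
    rw [h1 j]
    field_simp
    ring
  -- derivative of each term
  have hterm : ∀ j, HasFDerivAt (fun y => p y j * Real.log (p y j))
      ((1 + Real.log (p z j)) • Dp j) z := by
    intro j
    have h := (hpder j).fun_mul ((hpder j).log (hppos z j).ne')
    refine h.congr_fderiv (Eq.symm ?_)
    simp only [smul_smul]
    rw [← add_smul]
    congr 1
    field_simp
    rw [div_self (hppos z j).ne']
  have hf : HasFDerivAt (fun y : E => -∑ j, p y j * Real.log (p y j))
      (-(∑ j, (1 + Real.log (p z j)) • Dp j)) z :=
    (HasFDerivAt.fun_sum fun j _ => hterm j).neg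
  -- the claimed gradient
  set g : E := ∑ j, (p z j * (1 + Real.log (p z j))) •
      (-t (chat j) + ∑ k, ((Nc k : ℝ) * q z k / ∑ c, (Nc c : ℝ) * q z c) • t k) with hg
  -- weights simplification
  have hQpos : (0:ℝ) < ∑ c, Real.exp ⟪z, t c⟫ :=
    Finset.sum_pos (fun c _ => Real.exp_pos _) Finset.univ_nonempty
  have hSfib : S z = ∑ k, (Nc k : ℝ) * Real.exp ⟪z, t k⟫ :=
    fiber fun k => Real.exp ⟪z, t k⟫
  have hden : (∑ c, (Nc c : ℝ) * q z c) = S z / ∑ c, Real.exp ⟪z, t c⟫ := by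
    rw [hSfib, Finset.sum_div]
    exact Finset.sum_congr rfl fun c _ => by rw [hq, mul_div_assoc]
  have hw : ∀ k, ((Nc k : ℝ) * q z k / ∑ c, (Nc c : ℝ) * q z c)
      = (Nc k : ℝ) * Real.exp ⟪z, t k⟫ / S z := by
    intro k
    have hQ := hQpos.ne'
    have hSz := (hSpos z).ne'
    rw [hden, hq]
    field_simp
  -- key: the linear functionals agree
  have key : ∀ w : E, (∑ l, p z l * ⟪u l, w⟫)
      = ∑ k, ((Nc k : ℝ) * q z k / ∑ c, (Nc c : ℝ) * q z c) * ⟪t k, w⟫ := by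
    intro w
    have := fiber fun k => Real.exp ⟪z, t k⟫ / S z * ⟪t k, w⟫
    calc (∑ l, p z l * ⟪u l, w⟫)
        = ∑ l, Real.exp ⟪z, t (chat l)⟫ / S z * ⟪t (chat l), w⟫ := by
          exact Finset.sum_congr rfl fun l _ => by rw [hp]
      _ = ∑ k, (Nc k : ℝ) * (Real.exp ⟪z, t k⟫ / S z * ⟪t k, w⟫) := this
      _ = _ := by
          refine Finset.sum_congr rfl fun k _ => ?_
          rw [hw k]
          ring
  have hGrad : HasGradientAt (fun y : E => -∑ j, p y j * Real.log (p y j)) g z := by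
    rw [hasGradientAt_iff_hasFDerivAt]
    refine hf.congr_fderiv (Eq.symm ?_)
    ext w
    simp only [InnerProductSpace.toDual_apply_apply, hg, sum_inner, inner_smul_left,
      inner_add_left, inner_neg_left, inner_smul_left, real_inner_smul_left,
      ContinuousLinearMap.neg_apply, ContinuousLinearMap.sum_apply,
      ContinuousLinearMap.smul_apply, hDp, ContinuousLinearMap.sub_apply,
      ContinuousLinearMap.coe_smul', Pi.smul_apply, smul_eq_mul,
      RCLike.conj_to_real, map_mul]
    rw [← Finset.sum_neg_distrib]
    refine Finset.sum_congr rfl fun j _ => ?_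
    have hkey := key w
    have : ∑ l, p z l * ((innerSL ℝ (u l)) w) = ∑ l, p z l * ⟪u l, w⟫ := by
      simp [innerSL_apply_apply]
    rw [innerSL_apply_apply, this, hkey]
    simp only [hu]
    ring
  exact ⟨hGrad.differentiableAt, hGrad.gradient⟩
end

section
/- (Gradient vanishing of the soft contrastive loss under class collapse, real-multiplicity form.) Fix a real batch size ν > 0 and for n in the scaled simplex Δ = { n ∈ ℝ^C : n_k ≥ 0 for all k, Σ_{k=1}^C n_k = ν }, define π_k(n, z) = exp(⟪z, t_k⟫) / Σ_{l=1}^C n_l exp(⟪z, t_l⟫) and the soft contrastive objective g_n(z) = − Σ_{k=1}^C n_k π_k(n, z) log π_k(n, z). Then for every fixed z ∈ E: (i) the map n ↦ ∇g_n(z) is continuous on Δ; (ii) for every class k₀, ∇g_{ν e_{k₀}}(z) = 0 at the collapsed vertex ν e_{k₀}; consequently (iii) ‖∇g_n(z)‖ → 0 as n → ν e_{k₀} within Δ. (When n_k = N_k are the integer pseudo-label counts, g_n coincides with the per-sample soft contrastive loss f.) -/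
open scoped RealInnerProductSpace BigOperators

noncomputable def scgGradVec {E : Type*} [NormedAddCommGroup E] [InnerProductSpace ℝ E]
    {C : ℕ} (t : Fin C → E) (n : Fin C → ℝ) (z : E) : E :=
  (∑ l, n l * Real.exp ⟪z, t l⟫)⁻¹ • (∑ l, n l • (Real.exp ⟪z, t l⟫ • t l)) -
    ((∑ k, n k * (Real.exp ⟪z, t k⟫ * ⟪z, t k⟫)) •
        ((-((∑ l, n l * Real.exp ⟪z, t l⟫) ^ 2)⁻¹) • (∑ l, n l • (Real.exp ⟪z, t l⟫ • t l))) +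
      (∑ l, n l * Real.exp ⟪z, t l⟫)⁻¹ •
        (∑ k, n k • (Real.exp ⟪z, t k⟫ • t k + ⟪z, t k⟫ • (Real.exp ⟪z, t k⟫ • t k))))

theorem scg_hasGradientAt {E : Type*} [NormedAddCommGroup E] [InnerProductSpace ℝ E]
    [FiniteDimensional ℝ E]
    {C : ℕ} (t : Fin C → E) (n : Fin C → ℝ) (z : E)
    (hD : (∑ l, n l * Real.exp ⟪z, t l⟫) ≠ 0) :
    HasGradientAt (fun x => Real.log (∑ l, n l * Real.exp ⟪x, t l⟫) -
        (∑ k, n k * (Real.exp ⟪x, t k⟫ * ⟪x, t k⟫)) * (∑ l, n l * Real.exp ⟪x, t l⟫)⁻¹)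
      (scgGradVec t n z) z := by
  have hA : ∀ k : Fin C, HasFDerivAt (fun x : E => ⟪x, t k⟫) (innerSL ℝ (t k)) z := by
    intro k
    have : (fun x : E => ⟪x, t k⟫) = fun x : E => (innerSL ℝ (t k)) x :=
      funext fun x => by rw [innerSL_apply_apply, real_inner_comm]
    rw [this]
    exact (innerSL ℝ (t k)).hasFDerivAt
  have hE : ∀ k : Fin C, HasFDerivAt (fun x : E => Real.exp ⟪x, t k⟫)
      (Real.exp ⟪z, t k⟫ • innerSL ℝ (t k)) z := fun k =>
    (Real.hasDerivAt_exp _).comp_hasFDerivAt z (hA k)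
  have hDf : HasFDerivAt (fun x : E => ∑ l, n l * Real.exp ⟪x, t l⟫)
      (∑ l, n l • (Real.exp ⟪z, t l⟫ • innerSL ℝ (t l))) z :=
    HasFDerivAt.fun_sum fun l _ => (hE l).const_mul (n l)
  have hHf : HasFDerivAt (fun x : E => ∑ k, n k * (Real.exp ⟪x, t k⟫ * ⟪x, t k⟫))
      (∑ k, n k • (Real.exp ⟪z, t k⟫ • innerSL ℝ (t k) +
        ⟪z, t k⟫ • (Real.exp ⟪z, t k⟫ • innerSL ℝ (t k)))) z :=
    HasFDerivAt.fun_sum fun k _ => (((hE k).mul (hA k))).const_mul (n k)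
  have hlog : HasFDerivAt (fun x : E => Real.log (∑ l, n l * Real.exp ⟪x, t l⟫))
      ((∑ l, n l * Real.exp ⟪z, t l⟫)⁻¹ • (∑ l, n l • (Real.exp ⟪z, t l⟫ • innerSL ℝ (t l)))) z :=
    (Real.hasDerivAt_log hD).comp_hasFDerivAt (f := fun x : E => ∑ l, n l * Real.exp ⟪x, t l⟫) z hDf
  have hinv : HasFDerivAt (fun x : E => (∑ l, n l * Real.exp ⟪x, t l⟫)⁻¹)
      ((-((∑ l, n l * Real.exp ⟪z, t l⟫) ^ 2)⁻¹) •
        (∑ l, n l • (Real.exp ⟪z, t l⟫ • innerSL ℝ (t l)))) z :=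
    (hasDerivAt_inv hD).comp_hasFDerivAt z hDf
  have total := hlog.sub (hHf.mul hinv)
  rw [hasGradientAt_iff_hasFDerivAt]
  convert total using 1
  case e'_8 => rfl
  case e'_9 => rfl
  case e'_11 => rfl
  ext w
  simp [scgGradVec, inner_sub_left, inner_add_left, inner_smul_left, sum_inner,
    InnerProductSpace.toDual_apply_apply, ContinuousLinearMap.sum_apply, Finset.mul_sum,
    mul_comm, mul_assoc, mul_left_comm]

/-- Gradient vanishing of the soft contrastive loss under class collapse, real-multiplicity
form: on the scaled simplex `Δ = {n : ∀ k, 0 ≤ n k ∧ ∑ k, n k = ν}`, the map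
`n ↦ ∇ g_n(z)` is continuous, it vanishes at the collapsed vertex `ν e_{k₀}`, and hence
`‖∇ g_n(z)‖ → 0` as `n → ν e_{k₀}` within `Δ`. -/
theorem soft_contrastive_gradient_vanishing_real_multiplicity
    {E : Type*} [NormedAddCommGroup E] [InnerProductSpace ℝ E] [FiniteDimensional ℝ E]
    {C : ℕ} (hC : 1 ≤ C) (t : Fin C → E)
    (ν : ℝ) (hν : 0 < ν)
    (S : Set (Fin C → ℝ))
    (hS : S = {n : Fin C → ℝ | (∀ k, 0 ≤ n k) ∧ ∑ k, n k = ν})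
    (π : (Fin C → ℝ) → E → Fin C → ℝ)
    (hπ : ∀ (n : Fin C → ℝ) (z : E) (k : Fin C),
      π n z k = Real.exp ⟪z, t k⟫ / ∑ l, n l * Real.exp ⟪z, t l⟫)
    (g : (Fin C → ℝ) → E → ℝ)
    (hg : ∀ (n : Fin C → ℝ) (z : E),
      g n z = -∑ k, n k * (π n z k * Real.log (π n z k)))
    (z : E) (k₀ : Fin C) :
    ContinuousOn (fun n => gradient (g n) z) S ∧
    gradient (g (Pi.single k₀ ν)) z = 0 ∧
    Filter.Tendsto (fun n => ‖gradient (g n) z‖)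
      (nhdsWithin (Pi.single k₀ ν) S) (nhds 0) := by
  -- Positivity of the denominator on S
  have hDpos : ∀ n ∈ S, ∀ x : E, 0 < ∑ l, n l * Real.exp ⟪x, t l⟫ := by
    intro n hn x
    rw [hS] at hn
    obtain ⟨hnn, hsum⟩ := hn
    have hex : ∃ k, 0 < n k := by
      by_contra hc
      push_neg at hc
      have : ∑ k, n k = 0 := Finset.sum_eq_zero fun k _ => le_antisymm (hc k) (hnn k)
      rw [this] at hsum; linarith
    obtain ⟨k, hk⟩ := hex
    exact Finset.sum_pos' (fun i _ => mul_nonneg (hnn i) (Real.exp_pos _).le)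
      ⟨k, Finset.mem_univ k, mul_pos hk (Real.exp_pos _)⟩
  -- closed form of g on S
  have hveq : ∀ n ∈ S, ∀ x : E,
      g n x = Real.log (∑ l, n l * Real.exp ⟪x, t l⟫) -
        (∑ k, n k * (Real.exp ⟪x, t k⟫ * ⟪x, t k⟫)) * (∑ l, n l * Real.exp ⟪x, t l⟫)⁻¹ := by
    intro n hn x
    have hDx := hDpos n hn x
    set Dx := ∑ l, n l * Real.exp ⟪x, t l⟫ with hDxdef
    have hlogπ : ∀ k, Real.log (π n x k) = ⟪x, t k⟫ - Real.log Dx := by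
      intro k
      rw [hπ, ← hDxdef, Real.log_div (Real.exp_ne_zero _) (ne_of_gt hDx), Real.log_exp]
    rw [hg]
    have hterm : ∀ k, n k * (π n x k * Real.log (π n x k)) =
        n k * (Real.exp ⟪x, t k⟫ * ⟪x, t k⟫) * Dx⁻¹ -
          n k * Real.exp ⟪x, t k⟫ * (Dx⁻¹ * Real.log Dx) := by
      intro k
      rw [hlogπ k, hπ, ← hDxdef, div_eq_mul_inv]
      ring
    rw [Finset.sum_congr rfl fun k _ => hterm k, Finset.sum_sub_distrib,
      ← Finset.sum_mul, ← Finset.sum_mul, ← hDxdef, ← mul_assoc,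
      mul_inv_cancel₀ (ne_of_gt hDx), one_mul]
    ring
  -- gradient identification on S
  have hgradeq : ∀ n ∈ S, gradient (g n) z = scgGradVec t n z := by
    intro n hn
    have hfun : g n = fun x => Real.log (∑ l, n l * Real.exp ⟪x, t l⟫) -
        (∑ k, n k * (Real.exp ⟪x, t k⟫ * ⟪x, t k⟫)) * (∑ l, n l * Real.exp ⟪x, t l⟫)⁻¹ :=
      funext (hveq n hn)
    rw [hfun]
    exact (scg_hasGradientAt t n z (ne_of_gt (hDpos n hn z))).gradient
  -- continuity of the explicit gradient
  have hne : ∀ n ∈ S, (∑ l, n l * Real.exp ⟪z, t l⟫) ≠ 0 := fun n hn =>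
    ne_of_gt (hDpos n hn z)
  have cD : Continuous fun n : Fin C → ℝ => ∑ l, n l * Real.exp ⟪z, t l⟫ :=
    continuous_finset_sum _ fun l _ => (continuous_apply l).mul continuous_const
  have cH : Continuous fun n : Fin C → ℝ => ∑ k, n k * (Real.exp ⟪z, t k⟫ * ⟪z, t k⟫) :=
    continuous_finset_sum _ fun l _ => (continuous_apply l).mul continuous_const
  have cGd : Continuous fun n : Fin C → ℝ => ∑ l, n l • (Real.exp ⟪z, t l⟫ • t l) :=
    continuous_finset_sum _ fun l _ => (continuous_apply l).smul continuous_const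
  have cGh : Continuous fun n : Fin C → ℝ =>
      ∑ k, n k • (Real.exp ⟪z, t k⟫ • t k + ⟪z, t k⟫ • (Real.exp ⟪z, t k⟫ • t k)) :=
    continuous_finset_sum _ fun l _ => (continuous_apply l).smul continuous_const
  have hcont : ContinuousOn (fun n => scgGradVec t n z) S := by
    unfold scgGradVec
    apply ContinuousOn.sub
    · exact (cD.continuousOn.inv₀ hne).smul cGd.continuousOn
    · apply ContinuousOn.add
      · refine cH.continuousOn.smul (ContinuousOn.smul ?_ cGd.continuousOn)
        exact (((cD.pow 2).continuousOn.inv₀ fun n hn => pow_ne_zero 2 (hne n hn)).neg)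
      · exact (cD.continuousOn.inv₀ hne).smul cGh.continuousOn
  have hcont' : ContinuousOn (fun n => gradient (g n) z) S :=
    hcont.congr hgradeq
  -- the vertex is in S
  have hvS : Pi.single k₀ ν ∈ S := by
    rw [hS]
    refine ⟨fun k => ?_, ?_⟩
    · rcases eq_or_ne k k₀ with h | h
      · rw [h, Pi.single_eq_same]; exact hν.le
      · simp [Pi.single_eq_of_ne h]
    · simp [Finset.sum_pi_single']
  -- gradient vanishes at the vertex
  have hsingle : ∀ f : Fin C → ℝ, ∑ l, (Pi.single k₀ ν : Fin C → ℝ) l * f l = ν * f k₀ := by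
    intro f
    rw [Finset.sum_eq_single k₀ (fun b _ hb => by simp [Pi.single_eq_of_ne hb])
      (fun h => absurd (Finset.mem_univ k₀) h)]
    simp
  have hsingleV : ∀ v : Fin C → E, ∑ l, (Pi.single k₀ ν : Fin C → ℝ) l • v l = ν • v k₀ := by
    intro v
    rw [Finset.sum_eq_single k₀ (fun b _ hb => by simp [Pi.single_eq_of_ne hb])
      (fun h => absurd (Finset.mem_univ k₀) h)]
    simp
  have hvanish : gradient (g (Pi.single k₀ ν)) z = 0 := by
    rw [hgradeq _ hvS]
    unfold scgGradVec
    rw [hsingle, hsingle, hsingleV, hsingleV]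
    have he : Real.exp ⟪z, t k₀⟫ ≠ 0 := Real.exp_ne_zero _
    match_scalars
    field_simp
    ring
  refine ⟨hcont', hvanish, ?_⟩
  have htend := (hcont' (Pi.single k₀ ν) hvS).tendsto
  rw [hvanish] at htend
  simpa using htend.norm
end

section
/- (Binary-classification form of the soft contrastive gradient.) Let C = 2 with embeddings t_1, t_2 ∈ E, and let N_1, N_2 be the pseudo-label counts of classes 1 and 2 (N_1 + N_2 = N ≥ 1). Write q_1(z), q_2(z) for the class probabilities, π_1(z) = exp(⟪z, t_1⟫)/(N_1 exp(⟪z, t_1⟫) + N_2 exp(⟪z, t_2⟫)), π_2(z) = exp(⟪z, t_2⟫)/(N_1 exp(⟪z, t_1⟫) + N_2 exp(⟪z, t_2⟫)), and b_m(z) = π_m(z)(1 + log π_m(z)) for m = 1, 2. Then the per-sample soft contrastive loss f(z) = − Σ_{j=1}^N p_j(z) log p_j(z) satisfies, for every z ∈ E, ∇f(z) = [ b_1(z) q_2(z) − b_2(z) q_1(z) ] · ( N_1 N_2 / ( N_1 q_1(z) + N_2 q_2(z) ) ) · ( t_2 − t_1 ). -/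
open scoped RealInnerProductSpace BigOperators

/-- auxiliary 1-D function whose composition with `⟪·, t 1 - t 0⟫` is the loss. -/
noncomputable def softAux (n1 n2 u : ℝ) : ℝ :=
  Real.log (n1 + n2 * Real.exp u) - n2 * u * Real.exp u / (n1 + n2 * Real.exp u)

lemma softAux_hasDerivAt (n1 n2 : ℝ) (hpos : ∀ v : ℝ, 0 < n1 + n2 * Real.exp v) (u : ℝ) :
    HasDerivAt (softAux n1 n2)
      (-(n1 * n2 * u * Real.exp u) / (n1 + n2 * Real.exp u) ^ 2) u := by
  have hD : HasDerivAt (fun v : ℝ => n1 + n2 * Real.exp v) (n2 * Real.exp u) u :=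
    ((Real.hasDerivAt_exp u).const_mul n2).const_add n1
  have hDne : n1 + n2 * Real.exp u ≠ 0 := (hpos u).ne'
  have hlog := hD.log hDne
  have hnum : HasDerivAt (fun v : ℝ => n2 * v * Real.exp v)
      (n2 * Real.exp u + n2 * u * Real.exp u) u := by
    have := ((hasDerivAt_id u).const_mul n2).mul (Real.hasDerivAt_exp u)
    refine this.congr_deriv ?_
    simp only [id_eq]
    ring
  have hdiv := hnum.div hD hDne
  have := hlog.sub hdiv
  refine this.congr_deriv ?_
  field_simp
  ring

lemma gradient_comp_inner {E : Type*} [NormedAddCommGroup E] [InnerProductSpace ℝ E]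
    [CompleteSpace E] (g : ℝ → ℝ) (g' : ℝ) (v z : E) (hg : HasDerivAt g g' ⟪z, v⟫) :
    HasGradientAt (fun y : E => g ⟪y, v⟫) (g' • v) z := by
  have hv : HasFDerivAt (fun y : E => ⟪y, v⟫)
      ((InnerProductSpace.toDual ℝ E v : E →L[ℝ] ℝ)) z := by
    have : (fun y : E => ⟪y, v⟫) = fun y : E => ⟪v, y⟫ := by
      funext y; exact real_inner_comm _ _
    rw [this]
    exact (InnerProductSpace.toDual ℝ E v : E →L[ℝ] ℝ).hasFDerivAt
  have hcomp := hg.comp_hasFDerivAt z hv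
  rw [hasGradientAt_iff_hasFDerivAt]
  have heq : InnerProductSpace.toDual ℝ E (g' • v)
      = g' • (InnerProductSpace.toDual ℝ E v : E →L[ℝ] ℝ) := by
    ext y
    simp [inner_smul_left]
  rw [heq]
  exact hcomp

/-- Binary-classification form of the soft contrastive gradient: with two classes,
`∇f(z) = [b_1(z) q_2(z) - b_2(z) q_1(z)] · (N_1 N_2 / (N_1 q_1(z) + N_2 q_2(z))) • (t_2 - t_1)`.
(Classes `1, 2` are indexed by `0, 1 : Fin 2`.) -/
theorem soft_contrastive_loss_gradient_binary
    {E : Type*} [NormedAddCommGroup E] [InnerProductSpace ℝ E] [FiniteDimensional ℝ E]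
    {N : ℕ} (hN : 1 ≤ N) (t : Fin 2 → E)
    (chat : Fin N → Fin 2)
    (Nc : Fin 2 → ℕ)
    (hNc : ∀ k, Nc k = (Finset.univ.filter fun j : Fin N => chat j = k).card)
    (q : E → Fin 2 → ℝ)
    (hq : ∀ (z : E) (k : Fin 2),
      q z k = Real.exp ⟪z, t k⟫ / ∑ c, Real.exp ⟪z, t c⟫)
    (p : E → Fin N → ℝ)
    (hp : ∀ (z : E) (j : Fin N),
      p z j = Real.exp ⟪z, t (chat j)⟫ / ∑ l, Real.exp ⟪z, t (chat l)⟫)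
    (π : E → Fin 2 → ℝ)
    (hπ : ∀ (z : E) (m : Fin 2),
      π z m = Real.exp ⟪z, t m⟫ /
        ((Nc 0 : ℝ) * Real.exp ⟪z, t 0⟫ + (Nc 1 : ℝ) * Real.exp ⟪z, t 1⟫))
    (b : E → Fin 2 → ℝ)
    (hb : ∀ (z : E) (m : Fin 2), b z m = π z m * (1 + Real.log (π z m))) :
    ∀ z : E,
      gradient (fun y : E => -∑ j, p y j * Real.log (p y j)) z =
        ((b z 0 * q z 1 - b z 1 * q z 0) *
          ((Nc 0 : ℝ) * (Nc 1 : ℝ) / ((Nc 0 : ℝ) * q z 0 + (Nc 1 : ℝ) * q z 1))) •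
          (t 1 - t 0) := by
  intro z
  set n1 : ℝ := (Nc 0 : ℝ) with hn1def
  set n2 : ℝ := (Nc 1 : ℝ) with hn2def
  -- counts sum to N
  have hNsum : Nc 0 + Nc 1 = N := by
    have h2 : ∀ a : Fin 2, (a = 1) ↔ ¬ a = 0 := by decide
    rw [hNc 0, hNc 1, Finset.filter_congr (fun j _ => h2 (chat j)),
      Finset.card_filter_add_card_filter_not, Finset.card_univ, Fintype.card_fin]
  have hn1 : 0 ≤ n1 := Nat.cast_nonneg _
  have hn2 : 0 ≤ n2 := Nat.cast_nonneg _
  have hsum12 : (1 : ℝ) ≤ n1 + n2 := by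
    rw [hn1def, hn2def, ← Nat.cast_add, hNsum]
    exact_mod_cast hN
  have key : ∀ a c : ℝ, 0 < a → 0 < c → 0 < n1 * a + n2 * c := by
    intro a c ha hc
    rcases eq_or_lt_of_le hn1 with h1 | h1
    · have h2 : (1:ℝ) ≤ n2 := by rw [← h1] at hsum12; simpa using hsum12
      nlinarith
    · nlinarith [mul_nonneg hn2 hc.le]
  have hpos : ∀ v : ℝ, 0 < n1 + n2 * Real.exp v := by
    intro v
    have := key 1 (Real.exp v) one_pos (Real.exp_pos v)
    simpa using this
  -- the sum of exponentials over samples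
  have hsum_exp : ∀ y : E, ∑ l, Real.exp ⟪y, t (chat l)⟫
      = n1 * Real.exp ⟪y, t 0⟫ + n2 * Real.exp ⟪y, t 1⟫ := by
    intro y
    rw [← Finset.sum_fiberwise Finset.univ chat (fun l => Real.exp ⟪y, t (chat l)⟫)]
    rw [Fin.sum_univ_two]
    have h0 : ∀ k : Fin 2,
        ∑ l ∈ Finset.univ.filter (fun l => chat l = k), Real.exp ⟪y, t (chat l)⟫
          = (Nc k : ℝ) * Real.exp ⟪y, t k⟫ := by
      intro k
      have hc : ∑ l ∈ Finset.univ.filter (fun l => chat l = k), Real.exp ⟪y, t (chat l)⟫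
          = ∑ _l ∈ Finset.univ.filter (fun l => chat l = k), Real.exp ⟪y, t k⟫ :=
        Finset.sum_congr rfl (fun l hl => by rw [(Finset.mem_filter.mp hl).2])
      rw [hc, Finset.sum_const, hNc k, nsmul_eq_mul]
    rw [h0 0, h0 1]
  -- the loss equals softAux composed with inner product
  have hfun : (fun y : E => -∑ j, p y j * Real.log (p y j))
      = fun y : E => softAux n1 n2 ⟪y, t 1 - t 0⟫ := by
    funext y
    set x0 : ℝ := ⟪y, t 0⟫ with hx0
    set x1 : ℝ := ⟪y, t 1⟫ with hx1
    have hS : (0:ℝ) < n1 * Real.exp x0 + n2 * Real.exp x1 :=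
      key _ _ (Real.exp_pos _) (Real.exp_pos _)
    set S : ℝ := n1 * Real.exp x0 + n2 * Real.exp x1 with hSdef
    have hsum : ∑ j, p y j * Real.log (p y j)
        = n1 * (Real.exp x0 / S * Real.log (Real.exp x0 / S))
          + n2 * (Real.exp x1 / S * Real.log (Real.exp x1 / S)) := by
      have hpj : ∀ j, p y j = Real.exp ⟪y, t (chat j)⟫ / S := by
        intro j; rw [hp, hsum_exp]
      rw [← Finset.sum_fiberwise Finset.univ chat
        (fun j => p y j * Real.log (p y j)), Fin.sum_univ_two]
      have h0 : ∀ k : Fin 2,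
          ∑ j ∈ Finset.univ.filter (fun j => chat j = k), p y j * Real.log (p y j)
            = (Nc k : ℝ) * (Real.exp ⟪y, t k⟫ / S * Real.log (Real.exp ⟪y, t k⟫ / S)) := by
        intro k
        have hc : ∑ j ∈ Finset.univ.filter (fun j => chat j = k), p y j * Real.log (p y j)
            = ∑ _j ∈ Finset.univ.filter (fun j => chat j = k),
                Real.exp ⟪y, t k⟫ / S * Real.log (Real.exp ⟪y, t k⟫ / S) :=
          Finset.sum_congr rfl (fun j hj => by
            rw [hpj j, (Finset.mem_filter.mp hj).2])
        rw [hc, Finset.sum_const, hNc k, nsmul_eq_mul]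
      rw [h0 0, h0 1]
    rw [hsum]
    have hinner : ⟪y, t 1 - t 0⟫ = x1 - x0 := by
      rw [inner_sub_right]
    rw [hinner]
    unfold softAux
    have hDpos := hpos (x1 - x0)
    have hDeq : n1 + n2 * Real.exp (x1 - x0) = S / Real.exp x0 := by
      rw [Real.exp_sub]
      field_simp [hSdef]
      exact hSdef.symm
    have hlog0 : Real.log (Real.exp x0 / S) = x0 - Real.log S := by
      rw [Real.log_div (Real.exp_ne_zero _) hS.ne', Real.log_exp]
    have hlog1 : Real.log (Real.exp x1 / S) = x1 - Real.log S := by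
      rw [Real.log_div (Real.exp_ne_zero _) hS.ne', Real.log_exp]
    have hlogD : Real.log (n1 + n2 * Real.exp (x1 - x0)) = Real.log S - x0 := by
      rw [hDeq, Real.log_div hS.ne' (Real.exp_ne_zero _), Real.log_exp]
    rw [hlog0, hlog1, hlogD, hDeq, Real.exp_sub]
    have he0 : Real.exp x0 ≠ 0 := Real.exp_ne_zero _
    field_simp
    ring
  rw [hfun]
  -- gradient via chain rule
  set u : ℝ := ⟪z, t 1 - t 0⟫ with hu
  have hgrad := (gradient_comp_inner (softAux n1 n2)
    (-(n1 * n2 * u * Real.exp u) / (n1 + n2 * Real.exp u) ^ 2) (t 1 - t 0) z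
    (softAux_hasDerivAt n1 n2 hpos u)).gradient
  rw [hgrad]
  -- now show the scalars agree
  congr 1
  set x0 : ℝ := ⟪z, t 0⟫ with hx0
  set x1 : ℝ := ⟪z, t 1⟫ with hx1
  have huval : u = x1 - x0 := by rw [hu, inner_sub_right]
  have he0 : (0:ℝ) < Real.exp x0 := Real.exp_pos _
  have he1 : (0:ℝ) < Real.exp x1 := Real.exp_pos _
  have hS : (0:ℝ) < n1 * Real.exp x0 + n2 * Real.exp x1 :=
    key _ _ (Real.exp_pos _) (Real.exp_pos _)
  set S : ℝ := n1 * Real.exp x0 + n2 * Real.exp x1 with hSdef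
  have hT : (0:ℝ) < Real.exp x0 + Real.exp x1 := by positivity
  -- expand q, π, b
  have hqv : ∀ m : Fin 2, q z m = Real.exp ⟪z, t m⟫ / (Real.exp x0 + Real.exp x1) := by
    intro m; rw [hq, Fin.sum_univ_two]
  have hπv : ∀ m : Fin 2, π z m = Real.exp ⟪z, t m⟫ / S := by
    intro m; rw [hπ]
  have hlogπ : ∀ m : Fin 2, Real.log (π z m) = ⟪z, t m⟫ - Real.log S := by
    intro m
    rw [hπv, Real.log_div (Real.exp_ne_zero _) hS.ne', Real.log_exp]
  have hb0 : b z 0 = Real.exp x0 / S * (1 + (x0 - Real.log S)) := by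
    rw [hb, hlogπ, hπv]
  have hb1 : b z 1 = Real.exp x1 / S * (1 + (x1 - Real.log S)) := by
    rw [hb, hlogπ, hπv]
  have hq0 : q z 0 = Real.exp x0 / (Real.exp x0 + Real.exp x1) := hqv 0
  have hq1 : q z 1 = Real.exp x1 / (Real.exp x0 + Real.exp x1) := hqv 1
  rw [hb0, hb1, hq0, hq1, huval, Real.exp_sub]
  have hDpos := hpos (x1 - x0)
  rw [Real.exp_sub] at hDpos
  have hden : n1 * (Real.exp x0 / (Real.exp x0 + Real.exp x1))
      + n2 * (Real.exp x1 / (Real.exp x0 + Real.exp x1)) = S / (Real.exp x0 + Real.exp x1) := by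
    field_simp
    linarith [hSdef]
  rw [hden]
  field_simp
  rw [← hSdef, mul_div_assoc, div_self (pow_ne_zero 2 hS.ne')]
  ring
end

section
/- (Gradient of the diversity regularization loss.) Let z_1, …, z_N ∈ E, define batch-average class probabilities q̄_k = (1/N) Σ_{i=1}^N q_k(z_i) for each class k, and the regularization loss L_reg(z_1, …, z_N) = Σ_{k=1}^C q̄_k log q̄_k. Then L_reg is differentiable and for each i, its partial gradient with respect to z_i equals ∇_{z_i} L_reg = (1/N) Σ_{k=1}^C [ Σ_{j=1}^C q_j(z_i) log( q̄_k / q̄_j ) ] · q_k(z_i) · t_k. -/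
open scoped RealInnerProductSpace BigOperators

section Helpers

variable {E : Type*} [NormedAddCommGroup E] [InnerProductSpace ℝ E] [CompleteSpace E]

private theorem hasGradientAt_of_fderiv {f : E → ℝ} {D : E →L[ℝ] ℝ} {g x : E}
    (hD : HasFDerivAt f D x) (h : ∀ v, D v = ⟪g, v⟫) : HasGradientAt f g x := by
  have hDg : InnerProductSpace.toDual ℝ E g = D := by
    ext v
    simp [InnerProductSpace.toDual_apply_apply, h v]
  rw [hasGradientAt_iff_hasFDerivAt, hDg]
  exact hD

private theorem myGradientAt.sum {ι : Type*} (s : Finset ι) {f : ι → E → ℝ} {g : ι → E} {x : E}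
    (h : ∀ k ∈ s, HasGradientAt (f k) (g k) x) :
    HasGradientAt (fun y => ∑ k ∈ s, f k y) (∑ k ∈ s, g k) x := by
  rw [hasGradientAt_iff_hasFDerivAt, map_sum]
  exact HasFDerivAt.fun_sum fun k hk => (h k hk).hasFDerivAt

private theorem myGradientAt.const_mul {f : E → ℝ} {g x : E} (c : ℝ)
    (h : HasGradientAt f g x) :
    HasGradientAt (fun y => c * f y) (c • g) x := by
  rw [hasGradientAt_iff_hasFDerivAt, map_smul]
  exact h.hasFDerivAt.const_mul c

private theorem myGradientAt.add_const {f : E → ℝ} {g x : E} (c : ℝ)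
    (h : HasGradientAt f g x) :
    HasGradientAt (fun y => f y + c) g x :=
  h.hasFDerivAt.add_const c

private theorem myGradientAt.scomp {f : E → ℝ} {g x : E} {φ : ℝ → ℝ} {c : ℝ}
    (hφ : HasDerivAt φ c (f x)) (h : HasGradientAt f g x) :
    HasGradientAt (fun y => φ (f y)) (c • g) x := by
  rw [hasGradientAt_iff_hasFDerivAt, map_smul]
  exact hφ.comp_hasFDerivAt x h.hasFDerivAt

end Helpers

/-- Gradient of the diversity regularization loss
`L_reg(z₁, …, z_N) = ∑_k q̄_k log q̄_k` with `q̄_k = (1/N) ∑_i q_k(z_i)`: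
`∇_{z_i} L_reg = (1/N) ∑_k [∑_j q_j(z_i) log(q̄_k / q̄_j)] q_k(z_i) • t_k`. -/
theorem regularization_loss_gradient
    {E : Type*} [NormedAddCommGroup E] [InnerProductSpace ℝ E] [FiniteDimensional ℝ E]
    {C N : ℕ} (hC : 1 ≤ C) (hN : 1 ≤ N) (t : Fin C → E)
    (q : E → Fin C → ℝ)
    (hq : ∀ (z : E) (k : Fin C),
      q z k = Real.exp ⟪z, t k⟫ / ∑ c, Real.exp ⟪z, t c⟫)
    (qbar : (Fin N → E) → Fin C → ℝ)
    (hqbar : ∀ (Z : Fin N → E) (k : Fin C), qbar Z k = (1 / N : ℝ) * ∑ i, q (Z i) k)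
    (Lreg : (Fin N → E) → ℝ)
    (hLreg : ∀ Z : Fin N → E, Lreg Z = ∑ k, qbar Z k * Real.log (qbar Z k)) :
    ∀ (Z : Fin N → E) (i : Fin N),
      DifferentiableAt ℝ (fun y => Lreg (Function.update Z i y)) (Z i) ∧
      gradient (fun y => Lreg (Function.update Z i y)) (Z i) =
        (1 / N : ℝ) •
          ∑ k, ((∑ j, q (Z i) j * Real.log (qbar Z k / qbar Z j)) * q (Z i) k) • t k := by
  intro Z i
  haveI : Nonempty (Fin C) := Fin.pos_iff_nonempty.mp hC
  haveI : Nonempty (Fin N) := Fin.pos_iff_nonempty.mp hN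
  set x : E := Z i with hx
  -- positivity of softmax denominator
  have hspos : ∀ y : E, (0 : ℝ) < ∑ c, Real.exp ⟪y, t c⟫ := fun y =>
    Finset.sum_pos (fun c _ => Real.exp_pos _) Finset.univ_nonempty
  have hqpos : ∀ (y : E) (k : Fin C), 0 < q y k := by
    intro y k
    rw [hq]
    exact div_pos (Real.exp_pos _) (hspos y)
  have hqsum : ∀ y : E, ∑ k, q y k = 1 := by
    intro y
    simp only [hq]
    rw [← Finset.sum_div, div_self (hspos y).ne']
  have hNpos : (0 : ℝ) < N := by exact_mod_cast hN
  have hqbarpos : ∀ k, 0 < qbar Z k := by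
    intro k
    rw [hqbar]
    exact mul_pos (by positivity) (Finset.sum_pos (fun j _ => hqpos _ _) Finset.univ_nonempty)
  -- gradient of softmax coordinate
  have hgradq : ∀ k, HasGradientAt (fun y => q y k)
      (q x k • (t k - ∑ c, q x c • t c)) x := by
    intro k
    have hinner : ∀ (c : Fin C) (y : E),
        HasFDerivAt (fun w : E => (⟪w, t c⟫ : ℝ)) (innerSL ℝ (t c)) y := by
      intro c y
      have h1 : (fun w : E => (⟪w, t c⟫ : ℝ)) = fun w => (⟪t c, w⟫ : ℝ) := by
        funext w; exact real_inner_comm _ _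
      rw [h1]
      exact (innerSL ℝ (t c)).hasFDerivAt
    have hexp : ∀ (c : Fin C) (y : E),
        HasFDerivAt (fun w : E => Real.exp ⟪w, t c⟫)
          (Real.exp ⟪y, t c⟫ • innerSL ℝ (t c)) y := by
      intro c y
      exact (Real.hasDerivAt_exp ⟪y, t c⟫).comp_hasFDerivAt y (hinner c y)
    have hden : HasFDerivAt (fun w : E => ∑ c, Real.exp ⟪w, t c⟫)
        (∑ c, Real.exp ⟪x, t c⟫ • innerSL ℝ (t c)) x :=
      HasFDerivAt.fun_sum fun c _ => hexp c x
    have hinv : HasFDerivAt (fun w : E => (∑ c, Real.exp ⟪w, t c⟫)⁻¹)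
        ((-(((∑ c, Real.exp ⟪x, t c⟫)) ^ 2)⁻¹) •
          (∑ c, Real.exp ⟪x, t c⟫ • innerSL ℝ (t c))) x :=
      (hasDerivAt_inv (hspos x).ne').comp_hasFDerivAt x hden
    have hmul := (hexp k x).mul' hinv
    have hfun : (fun y : E => q y k) =
        fun w : E => Real.exp ⟪w, t k⟫ * (∑ c, Real.exp ⟪w, t c⟫)⁻¹ := by
      funext w; rw [hq, div_eq_mul_inv]
    rw [hfun]
    apply hasGradientAt_of_fderiv hmul
    intro v
    have hsne := (hspos x).ne'
    simp only [ContinuousLinearMap.add_apply, ContinuousLinearMap.smul_apply,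
      ContinuousLinearMap.coe_sum', Finset.sum_apply, innerSL_apply_apply,
      inner_smul_left, inner_sub_left, inner_sum, sum_inner, real_inner_smul_left,
      RCLike.star_def, conj_trivial, hq, smul_eq_mul,
      ContinuousLinearMap.smulRight_apply, op_smul_eq_smul]
    have h2 : (∑ c, Real.exp ⟪x, t c⟫ / (∑ c, Real.exp ⟪x, t c⟫) * ⟪t c, v⟫) =
        (∑ c, Real.exp ⟪x, t c⟫)⁻¹ * ∑ c, Real.exp ⟪x, t c⟫ * ⟪t c, v⟫ := by
      rw [Finset.mul_sum]; exact Finset.sum_congr rfl fun c _ => by ring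
    rw [h2]
    field_simp
    ring
  -- rewrite qbar of updated batch
  have hR : ∀ (y : E) (k : Fin C),
      qbar (Function.update Z i y) k =
        (1 / N : ℝ) * (q y k + ∑ j ∈ Finset.univ.erase i, q (Z j) k) := by
    intro y k
    rw [hqbar]
    congr 1
    have hupd : ∀ j : Fin N, q (Function.update Z i y j) k =
        Function.update (fun j => q (Z j) k) i (q y k) j := by
      intro j
      rcases eq_or_ne j i with rfl | h
      · simp
      · simp [Function.update_of_ne h]
    rw [Finset.sum_congr rfl fun j _ => hupd j,
      Finset.sum_update_of_mem (Finset.mem_univ i)]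
    simp [Finset.erase_eq]
  have hA : ∀ k, HasGradientAt (fun y => qbar (Function.update Z i y) k)
      ((1 / N : ℝ) • (q x k • (t k - ∑ c, q x c • t c))) x := by
    intro k
    have h := myGradientAt.const_mul (1 / N : ℝ)
      (myGradientAt.add_const (∑ j ∈ Finset.univ.erase i, q (Z j) k) (hgradq k))
    have hfun : (fun y => qbar (Function.update Z i y) k) =
        fun y => (1 / N : ℝ) * (q y k + ∑ j ∈ Finset.univ.erase i, q (Z j) k) :=
      funext fun y => hR y k
    rw [hfun]
    exact h
  have hAx : ∀ k, qbar (Function.update Z i x) k = qbar Z k := by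
    intro k; rw [hx, Function.update_eq_self]
  have hB : ∀ k, HasGradientAt
      (fun y => qbar (Function.update Z i y) k * Real.log (qbar (Function.update Z i y) k))
      ((Real.log (qbar Z k) + 1) • ((1 / N : ℝ) • (q x k • (t k - ∑ c, q x c • t c)))) x := by
    intro k
    have hu : HasDerivAt (fun u : ℝ => u * Real.log u) (Real.log (qbar Z k) + 1)
        (qbar (Function.update Z i x) k) := by
      rw [hAx k]
      have h := (hasDerivAt_id (qbar Z k)).fun_mul (Real.hasDerivAt_log (hqbarpos k).ne')
      simpa [mul_inv_cancel₀ (hqbarpos k).ne', add_comm] using h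
    exact myGradientAt.scomp (φ := fun u => u * Real.log u) hu (hA k)
  have hsum : HasGradientAt (fun y => Lreg (Function.update Z i y))
      (∑ k, (Real.log (qbar Z k) + 1) •
        ((1 / N : ℝ) • (q x k • (t k - ∑ c, q x c • t c)))) x := by
    have hfun : (fun y => Lreg (Function.update Z i y)) =
        fun y => ∑ k, qbar (Function.update Z i y) k *
          Real.log (qbar (Function.update Z i y) k) :=
      funext fun y => hLreg _
    rw [hfun]
    exact myGradientAt.sum Finset.univ fun k _ => hB k
  refine ⟨hsum.hasFDerivAt.differentiableAt, ?_⟩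
  rw [hsum.gradient]
  -- final algebraic identity
  have hS : (∑ j, (Real.log (qbar Z j) + 1) * q x j) =
      (∑ j, q x j * Real.log (qbar Z j)) + 1 := by
    simp only [add_mul, one_mul]
    rw [Finset.sum_add_distrib, hqsum x]
    congr 1
    exact Finset.sum_congr rfl fun j _ => mul_comm _ _
  have hkey : ∀ k, (∑ j, q x j * Real.log (qbar Z k / qbar Z j)) =
      Real.log (qbar Z k) + 1 - ∑ j, (Real.log (qbar Z j) + 1) * q x j := by
    intro k
    have hterm : ∀ j, q x j * Real.log (qbar Z k / qbar Z j)
        = q x j * Real.log (qbar Z k) - q x j * Real.log (qbar Z j) := by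
      intro j
      rw [Real.log_div (hqbarpos k).ne' (hqbarpos j).ne', mul_sub]
    rw [Finset.sum_congr rfl fun j _ => hterm j, Finset.sum_sub_distrib,
      ← Finset.sum_mul, hqsum x, one_mul, hS]
    ring
  have step1 : (∑ k, (Real.log (qbar Z k) + 1) •
        ((1 / N : ℝ) • (q x k • (t k - ∑ c, q x c • t c))))
      = (1 / N : ℝ) • ∑ k, ((Real.log (qbar Z k) + 1) * q x k) •
          (t k - ∑ c, q x c • t c) := by
    rw [Finset.smul_sum]
    refine Finset.sum_congr rfl fun k _ => ?_
    simp only [smul_smul]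
    congr 1
    ring
  rw [step1]
  congr 1
  have expand : ∀ k : Fin C,
      ((Real.log (qbar Z k) + 1) * q x k) • (t k - ∑ c, q x c • t c)
      = ((Real.log (qbar Z k) + 1) * q x k) • t k -
        ((Real.log (qbar Z k) + 1) * q x k) • (∑ c, q x c • t c) :=
    fun k => smul_sub _ _ _
  rw [Finset.sum_congr rfl fun k _ => expand k, Finset.sum_sub_distrib, ← Finset.sum_smul,
    Finset.smul_sum]
  simp only [smul_smul]
  rw [← Finset.sum_sub_distrib]
  refine Finset.sum_congr rfl fun k _ => ?_
  rw [← sub_smul]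
  congr 1
  rw [hkey k]
  ring
end

section
/- (Gradient of the CLIPTTA objective.) Let z_1, …, z_N ∈ E, let λ ∈ ℝ, and define L(z_1, …, z_N) = Σ_{i=1}^N f(z_i) + λ L_reg(z_1, …, z_N), where f(z) = − Σ_{j=1}^N p_j(z) log p_j(z) is the per-sample soft contrastive loss, q̄_k = (1/N) Σ_{i=1}^N q_k(z_i), and L_reg = Σ_{k=1}^C q̄_k log q̄_k. Then for each i, ∇_{z_i} L = Σ_{j=1}^N β_j(z_i) ( − t_{ĉ(j)} + Σ_{k=1}^C w_k(z_i) t_k ) + λ (1/N) Σ_{k=1}^C [ Σ_{j=1}^C q_j(z_i) log( q̄_k / q̄_j ) ] q_k(z_i) t_k, where β_j(z) = p_j(z)(1 + log p_j(z)) and w_k(z) = N_k q_k(z) / Σ_{c=1}^C N_c q_c(z). -/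
open scoped RealInnerProductSpace BigOperators

section Helpers

variable {E : Type*} [NormedAddCommGroup E] [InnerProductSpace ℝ E] [CompleteSpace E]
variable {f g : E → ℝ} {u v x : E}

lemma hga_inner (v : E) (x : E) : HasGradientAt (fun y => ⟪y, v⟫) v x := by
  rw [hasGradientAt_iff_hasFDerivAt]
  have h : (fun y : E => ⟪y, v⟫) = ⇑(InnerProductSpace.toDual ℝ E v) := by
    funext y; simp [InnerProductSpace.toDual_apply_apply, real_inner_comm]
  rw [h]
  exact (InnerProductSpace.toDual ℝ E v).hasFDerivAt

lemma hga_add (hf : HasGradientAt f u x) (hg : HasGradientAt g v x) :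
    HasGradientAt (fun y => f y + g y) (u + v) x := by
  rw [hasGradientAt_iff_hasFDerivAt] at hf hg ⊢
  simpa [map_add] using hf.fun_add hg

lemma hga_sub (hf : HasGradientAt f u x) (hg : HasGradientAt g v x) :
    HasGradientAt (fun y => f y - g y) (u - v) x := by
  rw [hasGradientAt_iff_hasFDerivAt] at hf hg ⊢
  simpa [map_sub] using hf.fun_sub hg

lemma hga_neg (hf : HasGradientAt f u x) :
    HasGradientAt (fun y => -f y) (-u) x := by
  rw [hasGradientAt_iff_hasFDerivAt] at hf ⊢
  simpa [map_neg] using hf.fun_neg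

lemma hga_const_mul (c : ℝ) (hf : HasGradientAt f u x) :
    HasGradientAt (fun y => c * f y) (c • u) x := by
  rw [hasGradientAt_iff_hasFDerivAt] at hf ⊢
  simpa [map_smul] using hf.const_mul c

lemma hga_mul (hf : HasGradientAt f u x) (hg : HasGradientAt g v x) :
    HasGradientAt (fun y => f y * g y) (f x • v + g x • u) x := by
  rw [hasGradientAt_iff_hasFDerivAt] at hf hg ⊢
  simpa [map_add, map_smul] using hf.fun_mul hg

lemma hga_sum {ι : Type*} (s : Finset ι) (F : ι → E → ℝ) (U : ι → E)
    (h : ∀ j ∈ s, HasGradientAt (F j) (U j) x) :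
    HasGradientAt (fun y => ∑ j ∈ s, F j y) (∑ j ∈ s, U j) x := by
  simp only [hasGradientAt_iff_hasFDerivAt] at h ⊢
  simpa [map_sum] using HasFDerivAt.fun_sum h

lemma hga_comp {h : ℝ → ℝ} {h' : ℝ} (hh : HasDerivAt h h' (f x))
    (hf : HasGradientAt f u x) :
    HasGradientAt (fun y => h (f y)) (h' • u) x := by
  rw [hasGradientAt_iff_hasFDerivAt] at hf ⊢
  simpa [map_smul, Function.comp_def] using hh.comp_hasFDerivAt x hf

lemma hga_exp_inner (v : E) (x : E) :
    HasGradientAt (fun y => Real.exp ⟪y, v⟫) (Real.exp ⟪x, v⟫ • v) x :=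
  hga_comp (Real.hasDerivAt_exp _) (hga_inner v x)

lemma hga_inv (hf : HasGradientAt f u x) (hfx : f x ≠ 0) :
    HasGradientAt (fun y => (f y)⁻¹) (-((f x) ^ 2)⁻¹ • u) x :=
  hga_comp (hasDerivAt_inv hfx) hf

lemma hga_log (hf : HasGradientAt f u x) (hfx : f x ≠ 0) :
    HasGradientAt (fun y => Real.log (f y)) ((f x)⁻¹ • u) x :=
  hga_comp (Real.hasDerivAt_log hfx) hf

end Helpers

lemma hasGradientAt_softCE {ι : Type*} [Fintype ι] [Nonempty ι]
    {E : Type*} [NormedAddCommGroup E] [InnerProductSpace ℝ E] [CompleteSpace E]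
    (t' : ι → E) (x : E) :
    HasGradientAt
      (fun y => -∑ j, (Real.exp ⟪y, t' j⟫ * (∑ l, Real.exp ⟪y, t' l⟫)⁻¹) *
        (⟪y, t' j⟫ - Real.log (∑ l, Real.exp ⟪y, t' l⟫)))
      (-∑ j, ((Real.exp ⟪x, t' j⟫ * (∑ l, Real.exp ⟪x, t' l⟫)⁻¹) *
          (1 + (⟪x, t' j⟫ - Real.log (∑ l, Real.exp ⟪x, t' l⟫)))) •
        (t' j - (∑ l, Real.exp ⟪x, t' l⟫)⁻¹ • ∑ l, Real.exp ⟪x, t' l⟫ • t' l)) x := by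
  have hTpos : 0 < ∑ l, Real.exp ⟪x, t' l⟫ :=
    Finset.sum_pos (fun l _ => Real.exp_pos _) Finset.univ_nonempty
  have hTne : (∑ l, Real.exp ⟪x, t' l⟫) ≠ 0 := ne_of_gt hTpos
  set Tv := ∑ l, Real.exp ⟪x, t' l⟫ with hTv
  set GT := ∑ l, Real.exp ⟪x, t' l⟫ • t' l with hGT
  have hT : HasGradientAt (fun y => ∑ l, Real.exp ⟪y, t' l⟫) GT x :=
    hga_sum Finset.univ _ _ (fun l _ => hga_exp_inner (t' l) x)
  apply hga_neg
  apply hga_sum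
  intro j _
  have h1 : HasGradientAt (fun y => Real.exp ⟪y, t' j⟫ * (∑ l, Real.exp ⟪y, t' l⟫)⁻¹)
      (Real.exp ⟪x, t' j⟫ • (-(Tv ^ 2)⁻¹ • GT) + Tv⁻¹ • (Real.exp ⟪x, t' j⟫ • t' j)) x :=
    hga_mul (hga_exp_inner (t' j) x) (hga_inv hT hTne)
  have h2 : HasGradientAt (fun y => ⟪y, t' j⟫ - Real.log (∑ l, Real.exp ⟪y, t' l⟫))
      (t' j - Tv⁻¹ • GT) x :=
    hga_sub (hga_inner (t' j) x) (hga_log hT hTne)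
  have h3 := hga_mul h1 h2
  convert h3 using 1
  have hsq : (Tv ^ 2)⁻¹ = Tv⁻¹ * Tv⁻¹ := by rw [sq, mul_inv]
  rw [hsq]
  module

lemma hga_mul_log {E : Type*} [NormedAddCommGroup E] [InnerProductSpace ℝ E] [CompleteSpace E]
    {f : E → ℝ} {u x : E} (hf : HasGradientAt f u x) (hfx : 0 < f x) :
    HasGradientAt (fun y => f y * Real.log (f y)) ((1 + Real.log (f x)) • u) x := by
  have h := hga_mul hf (hga_log hf hfx.ne')
  convert h using 1
  rw [smul_smul, mul_inv_cancel₀ hfx.ne', one_smul, add_smul, one_smul, add_comm]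

lemma hasGradientAt_reg {κ : Type*} [Fintype κ] [Nonempty κ]
    {E : Type*} [NormedAddCommGroup E] [InnerProductSpace ℝ E] [CompleteSpace E]
    (t : κ → E) (R : κ → ℝ) (hR : ∀ k, 0 ≤ R k) (c : ℝ) (hc : 0 < c) (x : E) :
    HasGradientAt
      (fun y => ∑ k, (c * (Real.exp ⟪y, t k⟫ * (∑ l, Real.exp ⟪y, t l⟫)⁻¹ + R k)) *
        Real.log (c * (Real.exp ⟪y, t k⟫ * (∑ l, Real.exp ⟪y, t l⟫)⁻¹ + R k)))
      (∑ k, ((1 + Real.log (c * (Real.exp ⟪x, t k⟫ * (∑ l, Real.exp ⟪x, t l⟫)⁻¹ + R k))) *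
          (c * (Real.exp ⟪x, t k⟫ * (∑ l, Real.exp ⟪x, t l⟫)⁻¹))) •
        (t k - (∑ l, Real.exp ⟪x, t l⟫)⁻¹ • ∑ l, Real.exp ⟪x, t l⟫ • t l)) x := by
  have hSpos : 0 < ∑ l, Real.exp ⟪x, t l⟫ :=
    Finset.sum_pos (fun l _ => Real.exp_pos _) Finset.univ_nonempty
  have hSne : (∑ l, Real.exp ⟪x, t l⟫) ≠ 0 := ne_of_gt hSpos
  set Sv := ∑ l, Real.exp ⟪x, t l⟫ with hSv
  set GS := ∑ l, Real.exp ⟪x, t l⟫ • t l with hGS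
  have hS : HasGradientAt (fun y => ∑ l, Real.exp ⟪y, t l⟫) GS x :=
    hga_sum Finset.univ _ _ (fun l _ => hga_exp_inner (t l) x)
  apply hga_sum
  intro k _
  have hφ : HasGradientAt (fun y => c * (Real.exp ⟪y, t k⟫ * (∑ l, Real.exp ⟪y, t l⟫)⁻¹ + R k))
      ((c * (Real.exp ⟪x, t k⟫ * Sv⁻¹)) • (t k - Sv⁻¹ • GS)) x := by
    have h := hga_const_mul c
      (hga_add (hga_mul (hga_exp_inner (t k) x) (hga_inv hS hSne)) (hasGradientAt_const x (R k)))
    convert h using 1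
    have hsq : (Sv ^ 2)⁻¹ = Sv⁻¹ * Sv⁻¹ := by rw [sq, mul_inv]
    rw [hsq]
    module
  have hpos : 0 < c * (Real.exp ⟪x, t k⟫ * Sv⁻¹ + R k) := by
    apply mul_pos hc
    have := Real.exp_pos ⟪x, t k⟫
    have h2 : 0 < Real.exp ⟪x, t k⟫ * Sv⁻¹ := mul_pos this (inv_pos.mpr hSpos)
    linarith [hR k]
  have h := hga_mul_log hφ hpos
  convert h using 1
  rw [smul_smul]

lemma fiber_sum {N C : ℕ} {M : Type*} [AddCommMonoid M] (g : Fin N → Fin C) (F : Fin C → M) :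
    ∑ l, F (g l) = ∑ k, (Finset.univ.filter fun j => g j = k).card • F k := by
  classical
  rw [← Finset.sum_fiberwise_of_maps_to (g := g) (fun l _ => Finset.mem_univ (g l)) (fun l => F (g l))]
  refine Finset.sum_congr rfl fun k _ => ?_
  rw [Finset.sum_congr rfl (fun l hl => by rw [(Finset.mem_filter.mp hl).2]), Finset.sum_const]

lemma update_comp_sum {ι α M : Type*} [Fintype ι] [DecidableEq ι] [AddCommMonoid M]
    (g : α → M) (Z : ι → α) (i : ι) (y : α) :
    ∑ j, g (Function.update Z i y j) = g y + ∑ j ∈ Finset.univ.erase i, g (Z j) := by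
  have h : (fun j => g (Function.update Z i y j)) = Function.update (fun j => g (Z j)) i (g y) := by
    funext j
    by_cases hj : j = i
    · subst hj; simp
    · simp [Function.update_apply, hj]
  rw [h, Finset.sum_update_of_mem (Finset.mem_univ i), Finset.erase_eq]

/-- Gradient of the CLIPTTA objective `L = ∑_i f(z_i) + λ L_reg`:
`∇_{z_i} L = ∑_j β_j(z_i) (-t_{ĉ(j)} + ∑_k w_k(z_i) t_k)
  + λ (1/N) ∑_k [∑_j q_j(z_i) log(q̄_k / q̄_j)] q_k(z_i) t_k`. -/
theorem cliptta_loss_gradient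
    {E : Type*} [NormedAddCommGroup E] [InnerProductSpace ℝ E] [FiniteDimensional ℝ E]
    {C N : ℕ} (hC : 1 ≤ C) (hN : 1 ≤ N) (t : Fin C → E)
    (chat : Fin N → Fin C)
    (Nc : Fin C → ℕ)
    (hNc : ∀ k, Nc k = (Finset.univ.filter fun j : Fin N => chat j = k).card)
    (q : E → Fin C → ℝ)
    (hq : ∀ (z : E) (k : Fin C),
      q z k = Real.exp ⟪z, t k⟫ / ∑ c, Real.exp ⟪z, t c⟫)
    (p : E → Fin N → ℝ)
    (hp : ∀ (z : E) (j : Fin N),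
      p z j = Real.exp ⟪z, t (chat j)⟫ / ∑ l, Real.exp ⟪z, t (chat l)⟫)
    (f : E → ℝ)
    (hf : ∀ z : E, f z = -∑ j, p z j * Real.log (p z j))
    (qbar : (Fin N → E) → Fin C → ℝ)
    (hqbar : ∀ (Z : Fin N → E) (k : Fin C), qbar Z k = (1 / N : ℝ) * ∑ i, q (Z i) k)
    (Lreg : (Fin N → E) → ℝ)
    (hLreg : ∀ Z : Fin N → E, Lreg Z = ∑ k, qbar Z k * Real.log (qbar Z k))
    (lam : ℝ)
    (L : (Fin N → E) → ℝ)
    (hL : ∀ Z : Fin N → E, L Z = (∑ i, f (Z i)) + lam * Lreg Z) :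
    ∀ (Z : Fin N → E) (i : Fin N),
      gradient (fun y => L (Function.update Z i y)) (Z i) =
        (∑ j, (p (Z i) j * (1 + Real.log (p (Z i) j))) •
          (-t (chat j) +
            ∑ k, ((Nc k : ℝ) * q (Z i) k / ∑ c, (Nc c : ℝ) * q (Z i) c) • t k))
        + lam • ((1 / N : ℝ) •
            ∑ k, ((∑ j, q (Z i) j * Real.log (qbar Z k / qbar Z j)) * q (Z i) k) • t k) := by
  intro Z i
  classical
  haveI : Nonempty (Fin C) := ⟨⟨0, hC⟩⟩
  haveI : Nonempty (Fin N) := ⟨⟨0, hN⟩⟩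
  -- basic positivity
  have hSpos : ∀ y : E, 0 < ∑ c, Real.exp ⟪y, t c⟫ :=
    fun y => Finset.sum_pos (fun c _ => Real.exp_pos _) Finset.univ_nonempty
  have hTpos : ∀ y : E, 0 < ∑ l, Real.exp ⟪y, t (chat l)⟫ :=
    fun y => Finset.sum_pos (fun l _ => Real.exp_pos _) Finset.univ_nonempty
  have hNpos : (0 : ℝ) < (N : ℝ) := by exact_mod_cast hN
  have hcpos : (0 : ℝ) < 1 / (N : ℝ) := by positivity
  have hqpos : ∀ (z : E) (k : Fin C), 0 < q z k := by
    intro z k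
    rw [hq]
    exact div_pos (Real.exp_pos _) (hSpos z)
  set R : Fin C → ℝ := fun k => ∑ j ∈ Finset.univ.erase i, q (Z j) k with hR
  have hRnonneg : ∀ k, 0 ≤ R k :=
    fun k => Finset.sum_nonneg fun j _ => (hqpos (Z j) k).le
  set Cf : ℝ := ∑ j ∈ Finset.univ.erase i, f (Z j) with hCf
  -- rewrite the function
  have hfun : (fun y => L (Function.update Z i y)) =
      fun y => ((-∑ j, (Real.exp ⟪y, t (chat j)⟫ * (∑ l, Real.exp ⟪y, t (chat l)⟫)⁻¹) *
          (⟪y, t (chat j)⟫ - Real.log (∑ l, Real.exp ⟪y, t (chat l)⟫)) + Cf) +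
        lam * ∑ k, ((1 / (N : ℝ)) * (Real.exp ⟪y, t k⟫ * (∑ l, Real.exp ⟪y, t l⟫)⁻¹ + R k)) *
          Real.log ((1 / (N : ℝ)) * (Real.exp ⟪y, t k⟫ * (∑ l, Real.exp ⟪y, t l⟫)⁻¹ + R k))) := by
    funext y
    rw [hL]
    congr 1
    · -- soft CE part
      rw [update_comp_sum f Z i y, hf y]
      congr 2
      refine Finset.sum_congr rfl fun j _ => ?_
      rw [hp y j, Real.log_div (Real.exp_ne_zero _) (hTpos y).ne', Real.log_exp,
        div_eq_mul_inv]
    · -- reg part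
      rw [hLreg]
      congr 1
      refine Finset.sum_congr rfl fun k _ => ?_
      have hk : qbar (Function.update Z i y) k =
          (1 / (N : ℝ)) * (Real.exp ⟪y, t k⟫ * (∑ l, Real.exp ⟪y, t l⟫)⁻¹ + R k) := by
        rw [hqbar, update_comp_sum (fun z => q z k) Z i y, hq y k, div_eq_mul_inv, div_eq_mul_inv]
      rw [hk]
  rw [hfun]
  -- gradient values
  set Tv : ℝ := ∑ l, Real.exp ⟪Z i, t (chat l)⟫ with hTv
  set Sv : ℝ := ∑ c, Real.exp ⟪Z i, t c⟫ with hSv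
  set GT : E := ∑ l, Real.exp ⟪Z i, t (chat l)⟫ • t (chat l) with hGT
  set GS : E := ∑ c, Real.exp ⟪Z i, t c⟫ • t c with hGS
  have key : HasGradientAt
      (fun y => ((-∑ j, (Real.exp ⟪y, t (chat j)⟫ * (∑ l, Real.exp ⟪y, t (chat l)⟫)⁻¹) *
          (⟪y, t (chat j)⟫ - Real.log (∑ l, Real.exp ⟪y, t (chat l)⟫)) + Cf) +
        lam * ∑ k, ((1 / (N : ℝ)) * (Real.exp ⟪y, t k⟫ * (∑ l, Real.exp ⟪y, t l⟫)⁻¹ + R k)) *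
          Real.log ((1 / (N : ℝ)) * (Real.exp ⟪y, t k⟫ * (∑ l, Real.exp ⟪y, t l⟫)⁻¹ + R k))))
      (((-∑ j, ((Real.exp ⟪Z i, t (chat j)⟫ * Tv⁻¹) *
          (1 + (⟪Z i, t (chat j)⟫ - Real.log Tv))) • (t (chat j) - Tv⁻¹ • GT)) + 0) +
        lam • ∑ k, ((1 + Real.log ((1 / (N : ℝ)) * (Real.exp ⟪Z i, t k⟫ * Sv⁻¹ + R k))) *
          ((1 / (N : ℝ)) * (Real.exp ⟪Z i, t k⟫ * Sv⁻¹))) • (t k - Sv⁻¹ • GS)) (Z i) :=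
    hga_add
      (hga_add (hasGradientAt_softCE (fun l => t (chat l)) (Z i)) (hasGradientAt_const (Z i) Cf))
      (hga_const_mul lam (hasGradientAt_reg t R hRnonneg (1 / (N : ℝ)) hcpos (Z i)))
  rw [key.gradient, add_zero]
  -- abbreviations and basic facts
  have hSne : Sv ≠ 0 := (hSpos (Z i)).ne'
  have hTne : Tv ≠ 0 := (hTpos (Z i)).ne'
  have hqx : ∀ k, q (Z i) k = Real.exp ⟪Z i, t k⟫ / Sv := fun k => hq (Z i) k
  have hpx : ∀ j, p (Z i) j = Real.exp ⟪Z i, t (chat j)⟫ / Tv := fun j => hp (Z i) j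
  have hqx' : ∀ k, Real.exp ⟪Z i, t k⟫ * Sv⁻¹ = q (Z i) k := fun k => by
    rw [hqx k, div_eq_mul_inv]
  congr 1
  · -- soft contrastive part
    have hTfib : Tv = ∑ k, (Nc k : ℝ) * Real.exp ⟪Z i, t k⟫ := by
      rw [hTv, fiber_sum chat (fun k => Real.exp ⟪Z i, t k⟫)]
      refine Finset.sum_congr rfl fun k _ => ?_
      rw [hNc k, nsmul_eq_mul]
    have hGTfib : GT = ∑ k, ((Nc k : ℝ) * Real.exp ⟪Z i, t k⟫) • t k := by
      rw [hGT, fiber_sum chat (fun k => Real.exp ⟪Z i, t k⟫ • t k)]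
      refine Finset.sum_congr rfl fun k _ => ?_
      rw [hNc k, ← Nat.cast_smul_eq_nsmul ℝ, smul_smul]
    have hW : ∑ k, ((Nc k : ℝ) * q (Z i) k / ∑ c, (Nc c : ℝ) * q (Z i) c) • t k
        = Tv⁻¹ • GT := by
      have hD : (∑ c, (Nc c : ℝ) * q (Z i) c) = Tv / Sv := by
        rw [hTfib, Finset.sum_div]
        refine Finset.sum_congr rfl fun c _ => ?_
        rw [hqx c, mul_div_assoc]
      rw [hD, hGTfib, Finset.smul_sum]
      refine Finset.sum_congr rfl fun k _ => ?_
      rw [hqx k, smul_smul]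
      congr 1
      field_simp
    rw [hW, ← Finset.sum_neg_distrib]
    refine Finset.sum_congr rfl fun j _ => ?_
    rw [hpx j, Real.log_div (Real.exp_ne_zero _) hTne, Real.log_exp, div_eq_mul_inv]
    module
  · -- regularizer part
    congr 1
    have hqbarZ : ∀ k, qbar Z k = (1 / (N : ℝ)) * (q (Z i) k + R k) := by
      intro k
      rw [hqbar Z k]
      congr 1
      exact (Finset.add_sum_erase _ (fun j => q (Z j) k) (Finset.mem_univ i)).symm
    have hubar : ∀ k, 0 < qbar Z k := by
      intro k
      rw [hqbarZ k]
      exact mul_pos hcpos (add_pos_of_pos_of_nonneg (hqpos _ k) (hRnonneg k))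
    have hGSq : Sv⁻¹ • GS = ∑ c, q (Z i) c • t c := by
      rw [hGS, Finset.smul_sum]
      refine Finset.sum_congr rfl fun c _ => ?_
      rw [smul_smul, mul_comm, hqx' c]
    have hQ1 : ∑ j, q (Z i) j = 1 := by
      rw [Finset.sum_congr rfl (fun j _ => hqx j), ← Finset.sum_div]
      have h1 : (∑ j, Real.exp ⟪Z i, t j⟫) = Sv := rfl
      rw [h1, div_self hSne]
    set Bv : ℝ := ∑ j, q (Z i) j * Real.log (qbar Z j) with hBv
    have hd : ∀ k, (∑ j, q (Z i) j * Real.log (qbar Z k / qbar Z j))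
        = Real.log (qbar Z k) - Bv := by
      intro k
      rw [Finset.sum_congr rfl (fun j _ => by
        rw [Real.log_div (hubar k).ne' (hubar j).ne', mul_sub]),
        Finset.sum_sub_distrib, ← Finset.sum_mul, hQ1, one_mul]
    simp only [hqx']
    simp only [← hqbarZ]
    rw [hGSq]
    simp only [hd]
    have hcsum : ∑ k, (1 + Real.log (qbar Z k)) * (1 / (N : ℝ) * q (Z i) k)
        = (1 / (N : ℝ)) * (1 + Bv) := by
      rw [Finset.sum_congr rfl (fun k _ => by
        show (1 + Real.log (qbar Z k)) * (1 / (N : ℝ) * q (Z i) k)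
          = (1 / (N : ℝ)) * (q (Z i) k + q (Z i) k * Real.log (qbar Z k))
        ring), ← Finset.mul_sum, Finset.sum_add_distrib, hQ1, ← hBv]
    simp only [smul_sub]
    rw [Finset.sum_sub_distrib, ← Finset.sum_smul, hcsum]
    simp only [Finset.smul_sum, smul_smul]
    rw [← Finset.sum_sub_distrib]
    refine Finset.sum_congr rfl fun k _ => ?_
    rw [← sub_smul]
    congr 1
    ring
end
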